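/- (Decay of detail coefficients.) Let f : ℝ → ℝ be differentiable and bounded with bounded derivative, let J ∈ ℕ, and let c^{(J)} be its samples on the dyadic grid, c^{(J)}_j = f(2^{−J} j) for j ∈ ℤ. For each ℓ = 1,…,J let α^{(ℓ)} : ℤ → ℝ be a finitely supported mask with Σ_{i∈ℤ} α^{(ℓ)}_{2i} = Σ_{i∈ℤ} α^{(ℓ)}_{2i+1} = 1, and let ζ^{(ℓ)} : ℤ → ℝ be absolutely summable with Σ_{i∈ℤ} ζ^{(ℓ)}_i = 1 and K_{ζ^{(ℓ)}} := 2 Σ_{i∈ℤ} |ζ^{(ℓ)}_i|·|i| < ∞. Define the multiscale transform by c^{(ℓ−1)} = D_{ζ^{(ℓ)}} c^{(ℓ)} and d^{(ℓ)} = c^{(ℓ)} − S_{α^{(ℓ)}} c^{(ℓ−1)} for ℓ = J,…,1. Then for every ℓ = 1,…,J: ‖d^{(ℓ)}‖_∞ ≤ ( K_{α^{(ℓ)},ζ^{(ℓ)}} · ‖f′‖_∞ · ‖ζ^{(ℓ)}‖₁^{−1} · ∏_{m=ℓ}^{J} ‖ζ^{(m)}‖₁ ) · 2^{−ℓ}, where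 K_{α^{(ℓ)},ζ^{(ℓ)}} = K_{ζ^{(ℓ)}}·‖α^{(ℓ)}‖₁ + K_{α^{(ℓ)}}·‖ζ^{(ℓ)}‖₁ and K_c := 2 Σ_{i∈ℤ} |c_i|·|i| for a sequence c. -/

import Mathlib

noncomputable section

/-- Sup norm of a bi-infinite real sequence. -/
def supNorm (c : ℤ → ℝ) : ℝ := ⨆ j, |c j|

/-- Supremum of absolute first differences. -/
def deltaSup (c : ℤ → ℝ) : ℝ := ⨆ j, |c (j + 1) - c j|

/-- ℓ¹ norm of a sequence. -/
def l1Norm (a : ℤ → ℝ) : ℝ := ∑' i, |a i|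

/-- The constant K_a = 2 Σ |a_i|·|i|. -/
def Kc (a : ℤ → ℝ) : ℝ := 2 * ∑' i : ℤ, |a i| * |(i : ℝ)|

/-- Subdivision operator (S_α c)_j = Σ_i α_{j-2i} c_i. -/
def subdiv (α c : ℤ → ℝ) : ℤ → ℝ := fun j => ∑' i, α (j - 2 * i) * c i

/-- Decimation operator (D_ζ c)_j = Σ_i ζ_{j-i} c_{2i}. -/
def decim (ζ c : ℤ → ℝ) : ℤ → ℝ := fun j => ∑' i, ζ (j - i) * c (2 * i)

/-!
Sampling `f` on the grid `2^{-J} ℤ` gives first differences of size at most `‖f′‖_∞ 2^{-J}`, and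
each decimation step `D_ζ` multiplies that bound by at most `2 ‖ζ‖₁`, because
`(D_ζ c)_{j+1} - (D_ζ c)_j = Σ_i ζ_{j-i} (c_{2i+2} - c_{2i})`. Since `Σ_i α_{j-2i} = Σ_k ζ_k = 1`,
`c_j - (S_α D_ζ c)_j = Σ_i α_{j-2i} Σ_k ζ_{i-k} (c_j - c_{2k})`, and telescoping gives
`|c_j - c_{2k}| ≤ (|j - 2i| + 2|i - k|) · sup_n |c_{n+1} - c_n|`; summing against the weights
bounds the detail by `K_{α,ζ}` times the first differences of `c^{(ℓ)}`.
-/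

open Finset Function

section Reindexing

variable {G E : Type*} [AddGroup G] [AddCommMonoid E] [TopologicalSpace E]

lemma summable_comp_sub_left {g : G → E} (hg : Summable g) (j : G) :
    Summable fun i => g (j - i) :=
  (Equiv.subLeft j).summable_iff.mpr hg

lemma tsum_comp_sub_left (g : G → E) (j : G) : ∑' i, g (j - i) = ∑' i, g i :=
  (Equiv.subLeft j).tsum_eq g

end Reindexing

lemma abs_tsum_le_of_abs_le {ι : Type*} {f g : ι → ℝ} (hg : Summable g) (h : ∀ i, |f i| ≤ g i) :
    |∑' i, f i| ≤ ∑' i, g i := by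
  rw [← Real.norm_eq_abs]
  exact tsum_of_norm_bounded hg.hasSum h

lemma l1Norm_nonneg (a : ℤ → ℝ) : 0 ≤ l1Norm a :=
  tsum_nonneg fun _ => abs_nonneg _

lemma Kc_nonneg (a : ℤ → ℝ) : 0 ≤ Kc a :=
  mul_nonneg zero_le_two (tsum_nonneg fun _ => by positivity)

lemma one_le_l1Norm {ζ : ℤ → ℝ} (hζ : Summable fun i => |ζ i|) (hζ_one : ∑' i, ζ i = 1) :
    1 ≤ l1Norm ζ := by
  simpa [hζ_one, l1Norm] using abs_tsum_le_of_abs_le hζ fun i => le_rfl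

lemma abs_sub_le_of_abs_succ_sub_le {c : ℤ → ℝ} {δ : ℝ} (h : ∀ j, |c (j + 1) - c j| ≤ δ)
    (a b : ℤ) : |c a - c b| ≤ |(a - b : ℝ)| * δ := by
  have step (b : ℤ) (n : ℕ) : |c (b + n) - c b| ≤ n * δ := by
    induction n with
    | zero => simp
    | succ n ih =>
      calc |c (b + (n + 1 : ℕ)) - c b|
          ≤ |c (b + n + 1) - c (b + n)| + |c (b + n) - c b| := by
            rw [Nat.cast_succ, ← add_assoc]; exact abs_sub_le _ _ _
        _ ≤ δ + n * δ := add_le_add (h _) ih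
        _ = (n + 1 : ℕ) * δ := by push_cast; ring
  wlog hba : b ≤ a generalizing a b
  · rw [abs_sub_comm, abs_sub_comm (a : ℝ)]
    exact this b a (le_of_not_ge hba)
  obtain ⟨n, rfl⟩ := Int.le.dest hba
  simpa using step b n

lemma abs_sample_succ_sub_le {f : ℝ → ℝ} (hf : Differentiable ℝ f) {F : ℝ}
    (hF : ∀ x, |deriv f x| ≤ F) {h : ℝ} (hh : 0 ≤ h) (j : ℤ) :
    |f (h * (j + 1 : ℤ)) - f (h * j)| ≤ F * h := by
  have := convex_univ.norm_image_sub_le_of_norm_deriv_le (fun x _ => hf x)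
    (fun x _ => hF x) (Set.mem_univ (h * j)) (Set.mem_univ (h * (j + 1 : ℤ)))
  simpa [Real.norm_eq_abs, mul_add, abs_of_nonneg hh] using this

section Decimation

variable {ζ c : ℤ → ℝ} {M : ℝ}

lemma summable_comp_sub_left_mul (hζ : Summable fun i => |ζ i|) {x : ℤ → ℝ}
    (hx : ∀ i, |x i| ≤ M) (j : ℤ) : Summable fun i => ζ (j - i) * x i :=
  .of_norm_bounded ((summable_comp_sub_left hζ j).mul_right M) fun i => by
    rw [Real.norm_eq_abs, abs_mul]
    exact mul_le_mul_of_nonneg_left (hx i) (abs_nonneg _)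

lemma abs_tsum_comp_sub_left_mul_le (hζ : Summable fun i => |ζ i|) {x : ℤ → ℝ}
    (hx : ∀ i, |x i| ≤ M) (j : ℤ) : |∑' i, ζ (j - i) * x i| ≤ l1Norm ζ * M := by
  refine (abs_tsum_le_of_abs_le ((summable_comp_sub_left hζ j).mul_right M) fun i => ?_).trans_eq ?_
  · rw [abs_mul]
    exact mul_le_mul_of_nonneg_left (hx i) (abs_nonneg _)
  · rw [tsum_mul_right, tsum_comp_sub_left (fun i => |ζ i|), l1Norm]

lemma abs_decim_le (hζ : Summable fun i => |ζ i|) (hc : ∀ j, |c j| ≤ M) (j : ℤ) :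
    |decim ζ c j| ≤ l1Norm ζ * M :=
  abs_tsum_comp_sub_left_mul_le hζ (fun i => hc (2 * i)) j

lemma decim_succ_sub (hζ : Summable fun i => |ζ i|) (hc : ∀ j, |c j| ≤ M) (j : ℤ) :
    decim ζ c (j + 1) - decim ζ c j = ∑' i, ζ (j - i) * (c (2 * i + 2) - c (2 * i)) := by
  have hshift : decim ζ c (j + 1) = ∑' i, ζ (j - i) * c (2 * i + 2) := by
    rw [decim, ← (Equiv.addRight (1 : ℤ)).tsum_eq]
    congr! 3 with i <;> simp only [Equiv.coe_addRight] <;> ring_nf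
  rw [hshift, decim, ← (summable_comp_sub_left_mul hζ (fun i => hc (2 * i + 2)) j).tsum_sub
    (summable_comp_sub_left_mul hζ (fun i => hc (2 * i)) j)]
  simp only [mul_sub]

lemma abs_decim_succ_sub_le (hζ : Summable fun i => |ζ i|) (hc : ∀ j, |c j| ≤ M) {δ : ℝ}
    (hΔ : ∀ j, |c (j + 1) - c j| ≤ δ) (j : ℤ) :
    |decim ζ c (j + 1) - decim ζ c j| ≤ 2 * l1Norm ζ * δ := by
  rw [decim_succ_sub hζ hc, mul_comm 2, mul_assoc]
  refine abs_tsum_comp_sub_left_mul_le hζ (fun i => ?_) j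
  calc |c (2 * i + 2) - c (2 * i)|
      ≤ |c (2 * i + 1 + 1) - c (2 * i + 1)| + |c (2 * i + 1) - c (2 * i)| := by
        rw [add_assoc (2 * i) 1 1]; exact abs_sub_le _ _ _
    _ ≤ 2 * δ := by linarith [hΔ (2 * i + 1), hΔ (2 * i)]

end Decimation

lemma bounded_and_abs_succ_sub_le_of_decim {J : ℕ} {ζ c : ℕ → ℤ → ℝ}
    (hζ : ∀ m, 1 ≤ m → m ≤ J → Summable fun i => |ζ m i|)
    (hrec : ∀ m, 1 ≤ m → m ≤ J → c (m - 1) = decim (ζ m) (c m)) {M δ : ℝ}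
    (hM : ∀ j, |c J j| ≤ M) (hδ : ∀ j, |c J (j + 1) - c J j| ≤ δ) {m : ℕ} (hm : m ≤ J) :
    (∃ M, ∀ j, |c m j| ≤ M) ∧
      ∀ j, |c m (j + 1) - c m j| ≤ (∏ k ∈ Ioc m J, 2 * l1Norm (ζ k)) * δ := by
  induction hm using Nat.decreasingInduction with
  | self => simpa using ⟨⟨M, hM⟩, hδ⟩
  | of_succ k hk ih =>
    obtain ⟨⟨M', hM'⟩, hΔ⟩ := ih
    have hζk := hζ (k + 1) (by omega) hk
    rw [show c k = decim (ζ (k + 1)) (c (k + 1)) by simpa using hrec (k + 1) (by omega) hk]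
    refine ⟨⟨_, abs_decim_le hζk hM'⟩, fun j => (abs_decim_succ_sub_le hζk hM' hΔ j).trans_eq ?_⟩
    rw [← prod_Ioc_consecutive _ k.le_succ hk, Nat.Ioc_succ_singleton, prod_singleton]
    ring

lemma abs_sub_decim_le {ζ c : ℤ → ℝ} {M δ : ℝ} (hζ : Summable fun i => |ζ i|)
    (hζK : Summable fun i => |ζ i| * |(i : ℝ)|) (hζ_one : ∑' i, ζ i = 1) (hc : ∀ j, |c j| ≤ M)
    (hΔ : ∀ j, |c (j + 1) - c j| ≤ δ) (j i : ℤ) :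
    |c j - decim ζ c i| ≤ |((j - 2 * i : ℤ) : ℝ)| * (l1Norm ζ * δ) + Kc ζ * δ := by
  have hδ : 0 ≤ δ := (abs_nonneg _).trans (hΔ 0)
  have hcj : c j = ∑' k, ζ (i - k) * c j := by
    rw [tsum_mul_right, tsum_comp_sub_left, hζ_one, one_mul]
  have hsplit : c j - decim ζ c i = ∑' k, ζ (i - k) * (c j - c (2 * k)) := by
    rw [decim, hcj, ← ((summable_comp_sub_left (summable_abs_iff.mp hζ) i).mul_right (c j)).tsum_sub
      (summable_comp_sub_left_mul hζ (fun k => hc (2 * k)) i), ← hcj]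
    simp only [mul_sub]
  set w : ℤ → ℝ := fun k => |ζ (i - k)| * (|((j - 2 * i : ℤ) : ℝ)| * δ) +
    |ζ (i - k)| * |((i - k : ℤ) : ℝ)| * (2 * δ)
  have hw : Summable w := ((summable_comp_sub_left hζ i).mul_right _).add
    ((summable_comp_sub_left hζK i).mul_right _)
  have hbound (k : ℤ) : |ζ (i - k) * (c j - c (2 * k))| ≤ w k := by
    have htri : |((j : ℝ) - (2 * k : ℤ))| ≤ |((j - 2 * i : ℤ) : ℝ)| + 2 * |((i - k : ℤ) : ℝ)| := by
      have hj : (j : ℝ) - (2 * k : ℤ) = (j - 2 * i : ℤ) + 2 * ((i - k : ℤ) : ℝ) := by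
        push_cast; ring
      rw [hj]
      exact (abs_add_le _ _).trans_eq (by rw [abs_mul, abs_two])
    calc |ζ (i - k) * (c j - c (2 * k))|
        ≤ |ζ (i - k)| * ((|((j - 2 * i : ℤ) : ℝ)| + 2 * |((i - k : ℤ) : ℝ)|) * δ) := by
          rw [abs_mul]
          exact mul_le_mul_of_nonneg_left ((abs_sub_le_of_abs_succ_sub_le hΔ j (2 * k)).trans
            (mul_le_mul_of_nonneg_right htri hδ)) (abs_nonneg _)
      _ = w k := by ring
  rw [hsplit]
  refine (abs_tsum_le_of_abs_le hw hbound).trans_eq ?_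
  rw [((summable_comp_sub_left hζ i).mul_right _).tsum_add
    ((summable_comp_sub_left hζK i).mul_right _), tsum_mul_right, tsum_mul_right,
    tsum_comp_sub_left (fun k => |ζ k|), tsum_comp_sub_left (fun k => |ζ k| * |(k : ℝ)|)]
  unfold l1Norm Kc
  ring

section Subdivision

variable {α : ℤ → ℝ}

lemma tsum_comp_sub_two_mul_eq_one (hα_even : ∑' i, α (2 * i) = 1)
    (hα_odd : ∑' i, α (2 * i + 1) = 1) (j : ℤ) : ∑' i, α (j - 2 * i) = 1 := by
  obtain ⟨m, rfl | rfl⟩ := Int.even_or_odd' j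
  · simpa [← mul_sub] using (tsum_comp_sub_left (fun i => α (2 * i)) m).trans hα_even
  · have (i : ℤ) : 2 * m + 1 - 2 * i = 2 * (m - i) + 1 := by ring
    simpa [this] using (tsum_comp_sub_left (fun i => α (2 * i + 1)) m).trans hα_odd

lemma abs_sub_subdiv_le (hα : (support α).Finite) (hα_even : ∑' i, α (2 * i) = 1)
    (hα_odd : ∑' i, α (2 * i + 1) = 1) {e : ℤ → ℝ} {x A B : ℝ} (hA : 0 ≤ A) (hB : 0 ≤ B) {j : ℤ}
    (he : ∀ i, |x - e i| ≤ |((j - 2 * i : ℤ) : ℝ)| * A + B) :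
    |x - subdiv α e j| ≤ Kc α / 2 * A + l1Norm α * B := by
  have hinj : Injective fun i : ℤ => j - 2 * i := fun a b h => by simp only at h; omega
  have hsumm (g : ℤ → ℝ) : Summable fun i => α (j - 2 * i) * g i :=
    summable_of_hasFiniteSupport <| (hα.preimage hinj.injOn).subset fun i hi =>
      left_ne_zero_of_mul hi
  have hx : x = ∑' i, α (j - 2 * i) * x := by
    rw [tsum_mul_right, tsum_comp_sub_two_mul_eq_one hα_even hα_odd, one_mul]
  have hsplit : x - subdiv α e j = ∑' i, α (j - 2 * i) * (x - e i) := by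
    rw [subdiv, hx, ← (hsumm _).tsum_sub (hsumm e), ← hx]
    simp only [mul_sub]
  have hfin (g : ℤ → ℝ) : Summable fun m => |α m| * g m :=
    summable_of_hasFiniteSupport <| hα.subset fun m hm => by
      rw [mem_support] at hm ⊢
      contrapose! hm
      simp [hm]
  set w : ℤ → ℝ := fun m => |α m| * |(m : ℝ)| * A + |α m| * B
  have hw : Summable w := ((hfin _).mul_right A).add (hfin _)
  calc |x - subdiv α e j| ≤ ∑' i, w (j - 2 * i) := by
        rw [hsplit]
        refine abs_tsum_le_of_abs_le (hw.comp_injective hinj) fun i => ?_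
        rw [abs_mul]
        refine (mul_le_mul_of_nonneg_left (he i) (abs_nonneg _)).trans_eq ?_
        simp only [w]
        ring
    _ ≤ ∑' m, w m := tsum_comp_le_tsum_of_inj hw (fun m => by positivity) hinj
    _ = Kc α / 2 * A + l1Norm α * B := by
        rw [((hfin _).mul_right A).tsum_add (hfin fun _ => B), tsum_mul_right, tsum_mul_right]
        unfold Kc l1Norm
        ring

end Subdivision

lemma abs_sub_subdiv_decim_le {α ζ c : ℤ → ℝ} {M δ : ℝ} (hα : (support α).Finite)
    (hα_even : ∑' i, α (2 * i) = 1) (hα_odd : ∑' i, α (2 * i + 1) = 1)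
    (hζ : Summable fun i => |ζ i|) (hζK : Summable fun i => |ζ i| * |(i : ℝ)|)
    (hζ_one : ∑' i, ζ i = 1) (hc : ∀ j, |c j| ≤ M) (hΔ : ∀ j, |c (j + 1) - c j| ≤ δ) (j : ℤ) :
    |c j - subdiv α (decim ζ c) j| ≤ (Kc ζ * l1Norm α + Kc α * l1Norm ζ) * δ := by
  have hδ : 0 ≤ δ := (abs_nonneg _).trans (hΔ 0)
  refine (abs_sub_subdiv_le hα hα_even hα_odd (mul_nonneg (l1Norm_nonneg ζ) hδ)
    (mul_nonneg (Kc_nonneg ζ) hδ) (abs_sub_decim_le hζ hζK hζ_one hc hΔ j)).trans ?_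
  nlinarith [mul_nonneg (mul_nonneg (Kc_nonneg α) (l1Norm_nonneg ζ)) hδ]

/-- Decay of the detail coefficients of the nonstationary multiscale transform. -/
theorem detail_coefficients_decay
    (f : ℝ → ℝ)
    (hf_diff : Differentiable ℝ f)
    (hf_bdd : ∃ M : ℝ, ∀ x : ℝ, |f x| ≤ M)
    (hf'_bdd : ∃ M : ℝ, ∀ x : ℝ, |deriv f x| ≤ M)
    (J : ℕ)
    (α ζ : ℕ → ℤ → ℝ)
    (hα_fin : ∀ ℓ : ℕ, 1 ≤ ℓ → ℓ ≤ J → (Function.support (α ℓ)).Finite)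
    (hα_even : ∀ ℓ : ℕ, 1 ≤ ℓ → ℓ ≤ J → ∑' i : ℤ, α ℓ (2 * i) = 1)
    (hα_odd : ∀ ℓ : ℕ, 1 ≤ ℓ → ℓ ≤ J → ∑' i : ℤ, α ℓ (2 * i + 1) = 1)
    (hζ_sum : ∀ ℓ : ℕ, 1 ≤ ℓ → ℓ ≤ J → Summable (fun i => |ζ ℓ i|))
    (hζ_one : ∀ ℓ : ℕ, 1 ≤ ℓ → ℓ ≤ J → ∑' i : ℤ, ζ ℓ i = 1)
    (hKζ : ∀ ℓ : ℕ, 1 ≤ ℓ → ℓ ≤ J → Summable (fun i : ℤ => |ζ ℓ i| * |(i : ℝ)|))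
    (c d : ℕ → ℤ → ℝ)
    (hcJ : ∀ j : ℤ, c J j = f ((2 : ℝ) ^ (-(J : ℤ)) * (j : ℝ)))
    (hc_rec : ∀ ℓ : ℕ, 1 ≤ ℓ → ℓ ≤ J → c (ℓ - 1) = decim (ζ ℓ) (c ℓ))
    (hd_def : ∀ ℓ : ℕ, 1 ≤ ℓ → ℓ ≤ J →
      d ℓ = fun k => c ℓ k - subdiv (α ℓ) (c (ℓ - 1)) k) :
    ∀ ℓ : ℕ, 1 ≤ ℓ → ℓ ≤ J →
      supNorm (d ℓ) ≤
        ((Kc (ζ ℓ) * l1Norm (α ℓ) + Kc (α ℓ) * l1Norm (ζ ℓ)) *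
            (⨆ x : ℝ, |deriv f x|) * (l1Norm (ζ ℓ))⁻¹ *
            ∏ m ∈ Finset.Icc ℓ J, l1Norm (ζ m)) *
          (2 : ℝ) ^ (-(ℓ : ℤ)) := by
  intro ℓ hℓ hℓJ
  obtain ⟨Mf, hMf⟩ := hf_bdd
  obtain ⟨Mf', hMf'⟩ := hf'_bdd
  set F := ⨆ x, |deriv f x|
  have hF (x : ℝ) : |deriv f x| ≤ F := le_ciSup ⟨Mf', by rintro _ ⟨y, rfl⟩; exact hMf' y⟩ x
  obtain ⟨⟨M, hM⟩, hΔ⟩ := bounded_and_abs_succ_sub_le_of_decim hζ_sum hc_rec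
    (fun j => (hcJ j).symm ▸ hMf _)
    (fun j => by rw [hcJ, hcJ]; exact abs_sample_succ_sub_le hf_diff hF (by positivity) j) hℓJ
  have hdetail (j : ℤ) := abs_sub_subdiv_decim_le (hα_fin ℓ hℓ hℓJ) (hα_even ℓ hℓ hℓJ)
    (hα_odd ℓ hℓ hℓJ) (hζ_sum ℓ hℓ hℓJ) (hKζ ℓ hℓ hℓJ) (hζ_one ℓ hℓ hℓJ) hM hΔ j
  rw [← hc_rec ℓ hℓ hℓJ] at hdetail
  rw [supNorm, hd_def ℓ hℓ hℓJ]
  refine (ciSup_le hdetail).trans_eq ?_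
  have hζℓ : l1Norm (ζ ℓ) ≠ 0 :=
    (zero_lt_one.trans_le (one_le_l1Norm (hζ_sum ℓ hℓ hℓJ) (hζ_one ℓ hℓ hℓJ))).ne'
  have hpow : (2 : ℝ) ^ (J - ℓ) * 2 ^ (-(J : ℤ)) = 2 ^ (-(ℓ : ℤ)) := by
    rw [← zpow_natCast, Nat.cast_sub hℓJ, ← zpow_add₀ two_ne_zero]
    ring_nf
  rw [← mul_prod_Ioc_eq_prod_Icc hℓJ, prod_mul_distrib, prod_const, Nat.card_Ioc, ← hpow]
  field_simp
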